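/- arXiv:1812.10912 — 2 statements merged into one kernel-verified Lean document; each statement's English description precedes it below -/
import Mathlib

section
/- Let W = (W_1, …, W_L) and W' = (W'_1, …, W'_L) be two weight tuples with ‖W_i‖₂ ≤ B_i and ‖W'_i‖₂ ≤ B_i for each i, each activation σ_i 1-Lipschitz with σ_i(0) = 0, and ‖x‖₂ ≤ B_x. Then |D_W(x) − D_{W'}(x)| ≤ ∑_{i=1}^L ((B_x ∏_{j=1}^L B_j)/B_i) · ‖W_i − W'_i‖₂. That is, the discriminator output is Lipschitz in each weight matrix with constant L_{W_i} = (B_x ∏_{j=1}^L B_j)/B_i. -/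
open MeasureTheory Set Matrix
open scoped BigOperators ENNReal NNReal

noncomputable def specNorm {m n : ℕ} (M : Matrix (Fin m) (Fin n) ℝ) : ℝ :=
  ‖LinearMap.toContinuousLinearMap (Matrix.toEuclideanLin M)‖

noncomputable def applyM {m n : ℕ} (M : Matrix (Fin m) (Fin n) ℝ)
    (x : EuclideanSpace ℝ (Fin n)) : EuclideanSpace ℝ (Fin m) :=
  Matrix.toEuclideanLin M x

abbrev WTuple (dims : ℕ → ℕ) := ∀ i : ℕ, Matrix (Fin (dims (i+1))) (Fin (dims i)) ℝ

abbrev ActTuple (dims : ℕ → ℕ) :=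
  ∀ i : ℕ, EuclideanSpace ℝ (Fin (dims (i+1))) → EuclideanSpace ℝ (Fin (dims (i+1)))

noncomputable def forward (dims : ℕ → ℕ) (W : WTuple dims) (σ : ActTuple dims) :
    (k : ℕ) → EuclideanSpace ℝ (Fin (dims 0)) → EuclideanSpace ℝ (Fin (dims k))
  | 0 => fun x => x
  | (k+1) => fun x => σ k (applyM (W k) (forward dims W σ k x))

noncomputable def discR (K : ℕ) (dims : ℕ → ℕ) (W : WTuple dims) (σ : ActTuple dims)
    (x : EuclideanSpace ℝ (Fin (dims 0))) : ℝ :=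
  ∑ j, applyM (W K) (forward dims W σ K x) j

noncomputable def empMeasure {n d : ℕ} (xs : Fin n → EuclideanSpace ℝ (Fin d)) :
    Measure (EuclideanSpace ℝ (Fin d)) :=
  (n : ℝ≥0∞)⁻¹ • ∑ i, Measure.dirac (xs i)

noncomputable def Fdist {d : ℕ} (F : Set (EuclideanSpace ℝ (Fin d) → ℝ)) (φ : ℝ → ℝ)
    (μ ν : Measure (EuclideanSpace ℝ (Fin d))) : ℝ :=
  ⨆ f : F, (∫ x, φ (f.1 x) ∂μ + ∫ x, φ (1 - f.1 x) ∂ν - 2 * φ (1/2))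

lemma applyM_le {m n : ℕ} (M : Matrix (Fin m) (Fin n) ℝ) (x : EuclideanSpace ℝ (Fin n)) :
    ‖applyM M x‖ ≤ specNorm M * ‖x‖ :=
  (LinearMap.toContinuousLinearMap (Matrix.toEuclideanLin M)).le_opNorm x

lemma applyM_split {m n : ℕ} (M N : Matrix (Fin m) (Fin n) ℝ)
    (a b : EuclideanSpace ℝ (Fin n)) :
    applyM M a - applyM N b = applyM (M - N) a + applyM N (a - b) := by
  simp only [applyM, map_sub, LinearMap.sub_apply]
  abel

lemma coord_le {n : ℕ} (v : EuclideanSpace ℝ (Fin n)) (i : Fin n) : |v i| ≤ ‖v‖ := by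
  rw [EuclideanSpace.norm_eq]
  rw [← Real.sqrt_sq_eq_abs]
  apply Real.sqrt_le_sqrt
  have : |v i| ^ 2 ≤ ∑ j, ‖v j‖ ^ 2 := by
    refine Finset.single_le_sum (f := fun j => ‖v j‖^2) (fun j _ => by positivity) (Finset.mem_univ i) |>.trans_eq' ?_
    simp [Real.norm_eq_abs]
  simpa [sq_abs] using this


/-- For two weight tuples W, W' with ‖W_i‖₂, ‖W'_i‖₂ ≤ B_i, 1-Lipschitz
activations vanishing at 0, and ‖x‖₂ ≤ B_x,
|D_W(x) − D_{W'}(x)| ≤ ∑_{i=1}^L ((B_x ∏_{j=1}^L B_j)/B_i) ‖W_i − W'_i‖₂.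
Here the network has L = K+1 layers. -/
theorem discriminator_lipschitz_in_weights
    (K : ℕ) (dims : ℕ → ℕ) (hone : dims (K+1) = 1)
    (W W' : WTuple dims) (σ : ActTuple dims)
    (B : ℕ → ℝ) (Bx : ℝ) (hB : ∀ i ≤ K, 0 < B i) (hBx : 0 < Bx)
    (hW : ∀ i ≤ K, specNorm (W i) ≤ B i)
    (hW' : ∀ i ≤ K, specNorm (W' i) ≤ B i)
    (hσ : ∀ i < K, LipschitzWith 1 (σ i) ∧ σ i 0 = 0)
    (x : EuclideanSpace ℝ (Fin (dims 0))) (hx : ‖x‖ ≤ Bx) :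
    |discR K dims W σ x - discR K dims W' σ x| ≤
      ∑ i ∈ Finset.range (K+1),
        (Bx * ∏ j ∈ Finset.range (K+1), B j) / B i * specNorm (W i - W' i) := by
  set s : ℕ → ℝ := fun i => specNorm (W i - W' i) with hs
  have hsnn : ∀ i, 0 ≤ s i := fun i => norm_nonneg _
  set P : ℕ → ℝ := fun k => ∏ j ∈ Finset.range k, B j with hP
  have hPpos : ∀ k ≤ K + 1, 0 < P k := by
    intro k hk
    exact Finset.prod_pos (fun j hj => hB j (by
      have := Finset.mem_range.mp hj; omega))
  -- key one-step inequality
  have key : ∀ k, k ≤ K → ∀ a b : EuclideanSpace ℝ (Fin (dims k)),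
      ‖applyM (W k) a - applyM (W' k) b‖ ≤ s k * ‖a‖ + B k * ‖a - b‖ := by
    intro k hk a b
    rw [applyM_split]
    calc ‖applyM (W k - W' k) a + applyM (W' k) (a - b)‖
        ≤ ‖applyM (W k - W' k) a‖ + ‖applyM (W' k) (a - b)‖ := norm_add_le _ _
      _ ≤ s k * ‖a‖ + specNorm (W' k) * ‖a - b‖ :=
          add_le_add (applyM_le _ _) (applyM_le _ _)
      _ ≤ s k * ‖a‖ + B k * ‖a - b‖ := by
          gcongr
          exact hW' k hk
  have main : ∀ k, k ≤ K →
      ‖forward dims W σ k x‖ ≤ Bx * P k ∧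
      ‖forward dims W σ k x - forward dims W' σ k x‖ ≤
        ∑ i ∈ Finset.range k, (Bx * P k) / B i * s i := by
    intro k
    induction k with
    | zero =>
      intro _
      constructor
      · simpa [forward, hP] using hx
      · simp [forward]
    | succ k ih =>
      intro hk
      have hkK : k ≤ K := by omega
      have hkK' : k < K := by omega
      obtain ⟨h1, h2⟩ := ih hkK
      obtain ⟨hlip, hzero⟩ := hσ k hkK'
      have hlip' : ∀ a b : EuclideanSpace ℝ (Fin (dims (k+1))),
          ‖σ k a - σ k b‖ ≤ ‖a - b‖ := by
        intro a b
        have := hlip.dist_le_mul a b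
        simpa [dist_eq_norm] using this
      have hPk : P (k+1) = P k * B k := Finset.prod_range_succ B k
      have hBk := hB k hkK
      have hPkpos := hPpos k (by omega)
      constructor
      · calc ‖forward dims W σ (k+1) x‖
            = ‖σ k (applyM (W k) (forward dims W σ k x)) - σ k 0‖ := by
              rw [hzero, sub_zero]; rfl
          _ ≤ ‖applyM (W k) (forward dims W σ k x) - 0‖ := hlip' _ _
          _ = ‖applyM (W k) (forward dims W σ k x)‖ := by rw [sub_zero]
          _ ≤ specNorm (W k) * ‖forward dims W σ k x‖ := applyM_le _ _
          _ ≤ B k * (Bx * P k) := by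
              apply mul_le_mul (hW k hkK) h1 (norm_nonneg _) hBk.le
          _ = Bx * P (k+1) := by rw [hPk]; ring
      · calc ‖forward dims W σ (k+1) x - forward dims W' σ (k+1) x‖
            = ‖σ k (applyM (W k) (forward dims W σ k x)) -
                σ k (applyM (W' k) (forward dims W' σ k x))‖ := rfl
          _ ≤ ‖applyM (W k) (forward dims W σ k x) -
                applyM (W' k) (forward dims W' σ k x)‖ := hlip' _ _
          _ ≤ s k * ‖forward dims W σ k x‖ +
                B k * ‖forward dims W σ k x - forward dims W' σ k x‖ := key k hkK _ _
          _ ≤ s k * (Bx * P k) +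
                B k * ∑ i ∈ Finset.range k, (Bx * P k) / B i * s i := by
              gcongr
              exact hsnn k
          _ = ∑ i ∈ Finset.range (k+1), (Bx * P (k+1)) / B i * s i := by
              rw [Finset.sum_range_succ, Finset.mul_sum, hPk, add_comm (s k * (Bx * P k))]
              congr 1
              · apply Finset.sum_congr rfl
                intro i hi
                have hBi : B i ≠ 0 := (hB i (by have := Finset.mem_range.mp hi; omega)).ne'
                field_simp
              · have hBk' : B k ≠ 0 := hBk.ne'
                field_simp
  obtain ⟨h1, h2⟩ := main K le_rfl
  set u := applyM (W K) (forward dims W σ K x) with hu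
  set u' := applyM (W' K) (forward dims W' σ K x) with hu'
  have hdisc : discR K dims W σ x - discR K dims W' σ x = ∑ j, (u - u') j := by
    simp [discR, ← hu, ← hu', Finset.sum_sub_distrib]
  rw [hdisc]
  have hcardeq : Fintype.card (Fin (dims (K+1))) = 1 := by simp [hone]
  have hcard : ∀ v : EuclideanSpace ℝ (Fin (dims (K+1))), |∑ j, v j| ≤ ‖v‖ := by
    intro v
    obtain ⟨j0, hj0⟩ := Fintype.card_eq_one_iff.mp hcardeq
    have hsum : ∑ j, v j = v j0 := by
      calc ∑ j, v j = ∑ _j : Fin (dims (K+1)), v j0 :=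
            Finset.sum_congr rfl (fun j _ => by rw [hj0 j])
        _ = v j0 := by simp [Finset.card_univ, hcardeq]
    rw [hsum]
    exact coord_le v j0
  calc |∑ j, (u - u') j| ≤ ‖u - u'‖ := hcard _
    _ ≤ s K * ‖forward dims W σ K x‖ + B K * ‖forward dims W σ K x - forward dims W' σ K x‖ :=
        key K le_rfl _ _
    _ ≤ s K * (Bx * P K) + B K * ∑ i ∈ Finset.range K, (Bx * P K) / B i * s i := by
        gcongr
        · exact hsnn K
        · exact (hB K le_rfl).le
    _ = ∑ i ∈ Finset.range (K+1), (Bx * P (K+1)) / B i * s i := by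
        have hPK : P (K+1) = P K * B K := Finset.prod_range_succ B K
        rw [Finset.sum_range_succ, Finset.mul_sum, hPK, add_comm (s K * (Bx * P K))]
        congr 1
        · apply Finset.sum_congr rfl
          intro i hi
          have hBi : B i ≠ 0 := (hB i (by have := Finset.mem_range.mp hi; omega)).ne'
          field_simp
        · have hBK : B K ≠ 0 := (hB K le_rfl).ne'
          field_simp
    _ = ∑ i ∈ Finset.range (K+1),
        (Bx * ∏ j ∈ Finset.range (K+1), B j) / B i * specNorm (W i - W' i) := rfl
end

section
/- Let F be any nonempty class of measurable functions ℝ^{d_1} → [0,1], let φ : [0,1] → ℝ be Lipschitz, let μ be a probability measure on ℝ^{d_1}, let x_1, …, x_n be points with empirical measure μ̂_n, let D_G be a nonempty set of probability measures on ℝ^{d_1}, let ε ≥ 0, and let ν_n be a probability measure satisfying d_{F,φ}(μ̂_n, ν_n) ≤ inf_{ν ∈ D_G} d_{F,φ}(μ̂_n, ν) + ε. Then d_{F,φ}(μ, ν_n) ≤ inf_{ν ∈ D_G} d_{F,φ}(μ, ν) + sup_{f ∈ F} ( E_{x∼μ}[φ(f(x))] − E_{x∼μ̂_n}[φ(f(x))]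 ) + sup_{f ∈ F} ( E_{x∼μ̂_n}[φ(f(x))] − E_{x∼μ}[φ(f(x))] ) + ε. -/
open MeasureTheory Set Matrix
open scoped BigOperators ENNReal NNReal

/-- oracle-inequality decomposition: if ν_n is an ε-approximate minimizer of
the empirical F-distance ν ↦ d_{F,φ}(muh_n, ν) over D_G, then
d_{F,φ}(μ, ν_n) ≤ inf_{ν∈D_G} d_{F,φ}(μ, ν)
  + sup_{f∈F}(E_μ[φ∘f] − E_{muh_n}[φ∘f]) + sup_{f∈F}(E_{muh_n}[φ∘f] − E_μ[φ∘f]) + ε. -/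
theorem oracle_inequality_decomposition
    (d1 n : ℕ) (hn : 0 < n)
    (F : Set (EuclideanSpace ℝ (Fin d1) → ℝ)) (hFne : F.Nonempty)
    (hFmeas : ∀ f ∈ F, Measurable f)
    (hF01 : ∀ f ∈ F, ∀ x, f x ∈ Set.Icc (0:ℝ) 1)
    (φ : ℝ → ℝ) (hφ : ∃ C : ℝ≥0, LipschitzWith C φ)
    (μ : Measure (EuclideanSpace ℝ (Fin d1))) [IsProbabilityMeasure μ]
    (xs : Fin n → EuclideanSpace ℝ (Fin d1))
    (DG : Set (Measure (EuclideanSpace ℝ (Fin d1)))) (hDG : DG.Nonempty)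
    (hDGprob : ∀ ν ∈ DG, IsProbabilityMeasure ν)
    (ε : ℝ) (hε : 0 ≤ ε)
    (νn : Measure (EuclideanSpace ℝ (Fin d1))) (hνn : IsProbabilityMeasure νn)
    (hopt : Fdist F φ (empMeasure xs) νn ≤
      (⨅ ν : DG, Fdist F φ (empMeasure xs) ν.1) + ε) :
    Fdist F φ μ νn ≤ (⨅ ν : DG, Fdist F φ μ ν.1)
      + (⨆ f : F, (∫ x, φ (f.1 x) ∂μ - ∫ x, φ (f.1 x) ∂(empMeasure xs)))
      + (⨆ f : F, (∫ x, φ (f.1 x) ∂(empMeasure xs) - ∫ x, φ (f.1 x) ∂μ))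
      + ε := by

  classical
  obtain ⟨C, hC⟩ := hφ
  haveI : Nonempty F := hFne.to_subtype
  haveI : Nonempty DG := hDG.to_subtype
  set muh := empMeasure xs with hmuhdef
  have hCnn : (0:ℝ) ≤ C := C.coe_nonneg
  haveI hmuhprob : IsProbabilityMeasure muh := by
    constructor
    simp only [hmuhdef, empMeasure, Measure.smul_apply, Measure.coe_finset_sum,
      Finset.sum_apply, measure_univ, smul_eq_mul]
    rw [Finset.sum_const, Finset.card_univ, Fintype.card_fin, nsmul_eq_mul, mul_one]
    exact ENNReal.inv_mul_cancel (by exact_mod_cast hn.ne') (by simp)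
  have key : ∀ (ρ : Measure (EuclideanSpace ℝ (Fin d1))), IsProbabilityMeasure ρ →
      ∀ g : EuclideanSpace ℝ (Fin d1) → ℝ, Measurable g → (∀ x, g x ∈ Set.Icc (0:ℝ) 1) →
      |∫ x, φ (g x) ∂ρ - φ (1/2)| ≤ C / 2 := by
    intro ρ hρ g hg hg01
    haveI := hρ
    have hptw : ∀ x, |φ (g x) - φ (1/2)| ≤ C / 2 := by
      intro x
      have h1 := hC.dist_le_mul (g x) (1/2)
      rw [Real.dist_eq, Real.dist_eq] at h1
      have hx := hg01 x
      have h2 : |g x - 1/2| ≤ 1/2 := by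
        rw [abs_le]; constructor
        · linarith [hx.1]
        · linarith [hx.2]
      nlinarith
    have hmg : Measurable fun x => φ (g x) := hC.continuous.measurable.comp hg
    have hint : Integrable (fun x => φ (g x)) ρ := by
      refine ⟨hmg.aestronglyMeasurable, ?_⟩
      apply HasFiniteIntegral.of_bounded (C := |φ (1/2)| + C/2)
      filter_upwards with x
      have h1 := hptw x
      have h2 := abs_sub_abs_le_abs_sub (φ (g x)) (φ (1/2))
      simp only [Real.norm_eq_abs]
      linarith
    have heq : ∫ x, (φ (g x) - φ (1/2)) ∂ρ = ∫ x, φ (g x) ∂ρ - φ (1/2) := by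
      rw [integral_sub hint (integrable_const _), integral_const]
      simp
    rw [← heq]
    have hb := norm_integral_le_of_norm_le_const (μ := ρ) (C := (C:ℝ)/2)
      (f := fun x => φ (g x) - φ (1/2)) (by filter_upwards with x; simpa [Real.norm_eq_abs] using hptw x)
    simpa [Real.norm_eq_abs, measure_univ] using hb
  have hone : ∀ f : F, ∀ x, (1 - f.1 x) ∈ Set.Icc (0:ℝ) 1 := by
    intro f x
    have hx := hF01 f.1 f.2 x
    exact ⟨by linarith [hx.2], by linarith [hx.1]⟩
  have hI : ∀ (ρ : Measure (EuclideanSpace ℝ (Fin d1))), IsProbabilityMeasure ρ → ∀ f : F,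
      |∫ x, φ (f.1 x) ∂ρ - φ (1/2)| ≤ C / 2 := fun ρ hρ f =>
    key ρ hρ f.1 (hFmeas f.1 f.2) (hF01 f.1 f.2)
  have hJ : ∀ (ρ : Measure (EuclideanSpace ℝ (Fin d1))), IsProbabilityMeasure ρ → ∀ f : F,
      |∫ x, φ (1 - f.1 x) ∂ρ - φ (1/2)| ≤ C / 2 := fun ρ hρ f =>
    key ρ hρ (fun x => 1 - f.1 x) (measurable_const.sub (hFmeas f.1 f.2)) (hone f)
  have hFB : ∀ (ρ τ : Measure (EuclideanSpace ℝ (Fin d1))), IsProbabilityMeasure ρ →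
      IsProbabilityMeasure τ →
      BddAbove (Set.range fun f : F =>
        ∫ x, φ (f.1 x) ∂ρ + ∫ x, φ (1 - f.1 x) ∂τ - 2 * φ (1/2)) := by
    intro ρ τ hρ hτ
    refine ⟨C, ?_⟩
    rintro _ ⟨f, rfl⟩
    have h1 := abs_le.mp (hI ρ hρ f)
    have h2 := abs_le.mp (hJ τ hτ f)
    simp only
    linarith [h1.2, h2.2]
  have hAB : ∀ (ρ τ : Measure (EuclideanSpace ℝ (Fin d1))), IsProbabilityMeasure ρ →
      IsProbabilityMeasure τ →
      BddAbove (Set.range fun f : F => ∫ x, φ (f.1 x) ∂ρ - ∫ x, φ (f.1 x) ∂τ) := by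
    intro ρ τ hρ hτ
    refine ⟨C, ?_⟩
    rintro _ ⟨f, rfl⟩
    have h1 := abs_le.mp (hI ρ hρ f)
    have h2 := abs_le.mp (hI τ hτ f)
    simp only
    linarith [h1.2, h2.1]
  have hstep : ∀ (ρ ρ' τ : Measure (EuclideanSpace ℝ (Fin d1))), IsProbabilityMeasure ρ →
      IsProbabilityMeasure ρ' → IsProbabilityMeasure τ →
      Fdist F φ ρ τ ≤ Fdist F φ ρ' τ +
        ⨆ f : F, (∫ x, φ (f.1 x) ∂ρ - ∫ x, φ (f.1 x) ∂ρ') := by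
    intro ρ ρ' τ hρ hρ' hτ
    unfold Fdist
    apply ciSup_le
    intro f
    have h1 : (∫ x, φ (f.1 x) ∂ρ' + ∫ x, φ (1 - f.1 x) ∂τ - 2 * φ (1/2)) ≤
        ⨆ f : F, (∫ x, φ (f.1 x) ∂ρ' + ∫ x, φ (1 - f.1 x) ∂τ - 2 * φ (1/2)) :=
      le_ciSup (hFB ρ' τ hρ' hτ) f
    have h2 : (∫ x, φ (f.1 x) ∂ρ - ∫ x, φ (f.1 x) ∂ρ') ≤
        ⨆ f : F, (∫ x, φ (f.1 x) ∂ρ - ∫ x, φ (f.1 x) ∂ρ') :=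
      le_ciSup (hAB ρ ρ' hρ hρ') f
    linarith
  have hDGbdd : BddBelow (Set.range fun ν : DG => Fdist F φ muh ν.1) := by
    refine ⟨-(C:ℝ), ?_⟩
    rintro _ ⟨ν, rfl⟩
    obtain ⟨f0, hf0⟩ := hFne
    have hνp := hDGprob ν.1 ν.2
    have h1 := abs_le.mp (hI muh hmuhprob ⟨f0, hf0⟩)
    have h2 := abs_le.mp (hJ ν.1 hνp ⟨f0, hf0⟩)
    have h3 : (∫ x, φ ((⟨f0, hf0⟩ : F).1 x) ∂muh + ∫ x, φ (1 - (⟨f0, hf0⟩ : F).1 x) ∂ν.1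
        - 2 * φ (1/2)) ≤ Fdist F φ muh ν.1 := le_ciSup (hFB muh ν.1 hmuhprob hνp) ⟨f0, hf0⟩
    simp only at h3 ⊢
    linarith [h1.1, h2.1]
  have s1 : Fdist F φ μ νn ≤ Fdist F φ muh νn +
      ⨆ f : F, (∫ x, φ (f.1 x) ∂μ - ∫ x, φ (f.1 x) ∂muh) :=
    hstep μ muh νn inferInstance hmuhprob hνn
  have s3 : (⨅ ν : DG, Fdist F φ muh ν.1) ≤ (⨅ ν : DG, Fdist F φ μ ν.1) +
      ⨆ f : F, (∫ x, φ (f.1 x) ∂muh - ∫ x, φ (f.1 x) ∂μ) := by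
    rw [← sub_le_iff_le_add]
    apply le_ciInf
    intro ν
    have hνp := hDGprob ν.1 ν.2
    have h1 : Fdist F φ muh ν.1 ≤ Fdist F φ μ ν.1 +
        ⨆ f : F, (∫ x, φ (f.1 x) ∂muh - ∫ x, φ (f.1 x) ∂μ) :=
      hstep muh μ ν.1 hmuhprob inferInstance hνp
    have h2 := ciInf_le hDGbdd ν
    linarith
  linarith [hopt]
end
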